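/- Let G be a group satisfying (H1) and let B₁, B₂ be nontrivial basal subgroups of G such that C_G(B₁ ∩ B₂) = C_G(B₁) (i.e. the class [B₁] lies below [B₂] in the structure lattice). Then N_G(B₁) ≤ N_G(B₂). -/

import Mathlib

variable {G : Type*} [Group G]

/-- The conjugate `B ^ g = g⁻¹ * B * g` of a subgroup `B` by an element `g`. -/
def conjBy (B : Subgroup G) (g : G) : Subgroup G :=
  B.map (MulAut.conj g⁻¹).toMonoidHom

/-- A subgroup is virtually solvable if it has a solvable subgroup of finite index. -/
def VirtSolvable (H : Subgroup G) : Prop :=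
  ∃ M : Subgroup G, M ≤ H ∧ M.relIndex H ≠ 0 ∧ IsSolvable ↥M

/-- A subgroup is virtually nilpotent if it has a nilpotent subgroup of finite index. -/
def VirtNilpotent (H : Subgroup G) : Prop :=
  ∃ M : Subgroup G, M ≤ H ∧ M.relIndex H ≠ 0 ∧ Group.IsNilpotent ↥M

/-- Hypothesis (H1): every virtually solvable subgroup whose normalizer has finite index
(i.e. belonging to `L(G)`) is trivial. -/
def HypH1 (G : Type*) [Group G] : Prop :=
  ∀ H : Subgroup G, (Subgroup.normalizer (H : Set G)).FiniteIndex → VirtSolvable H → H = ⊥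

/-- Hypothesis (H2): every nontrivial normal subgroup of `G` contains the derived subgroup
of some finite-index subgroup of `G`. -/
def HypH2 (G : Type*) [Group G] : Prop :=
  ∀ N : Subgroup G, N.Normal → N ≠ ⊥ →
    ∃ G₀ : Subgroup G, G₀.FiniteIndex ∧ ⁅G₀, G₀⁆ ≤ N

/-- `VA K H` means `K ≤va H`: `K ≤ H` and `K` contains the derived subgroup of some
finite-index subgroup of `H`. -/
def VA (K H : Subgroup G) : Prop :=
  K ≤ H ∧ ∃ A : Subgroup G, A ≤ H ∧ A.relIndex H ≠ 0 ∧ ⁅A, A⁆ ≤ K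

/-- A subgroup `B` is basal if its normalizer has finite index and every conjugate of `B`
either equals `B` or meets `B` trivially. -/
def IsBasal (B : Subgroup G) : Prop :=
  (Subgroup.normalizer (B : Set G)).FiniteIndex ∧ ∀ g : G, conjBy B g = B ∨ conjBy B g ⊓ B = ⊥

/-- The rigid normalizer `R(A)` of a basal subgroup `A`: the intersection of the
normalizers of all basal subgroups meeting `A` trivially. -/
def rigidNormalizer (A : Subgroup G) : Subgroup G :=
  ⨅ B ∈ {B : Subgroup G | IsBasal B ∧ A ⊓ B = ⊥}, Subgroup.normalizer (B : Set G)


/-!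
If `g` normalizes `B₁` but not `B₂`, then `B₂ᵍ ∩ B₂ = 1`, and under (H1) distinct conjugates of a
basal subgroup commute elementwise. Conjugating the hypothesis by `g` gives
`C(B₁ ∩ B₂ᵍ) = C(B₁)`. As `B₁ ∩ B₂ᵍ` centralizes `B₁ ∩ B₂`, it lies in `C(B₁)`, so `B₁`
centralizes `B₁ ∩ B₂ᵍ`, i.e. `B₁` is abelian; being in `L(G)`, it is trivial by (H1).

That `B` and `C = Bᵍ` commute when `B ∩ C = 1`: let `K` be the normal core of `N(B)`. Elements of
`C ∩ N(B)` and of `B ∩ K` normalize each other's subgroup, so their commutators lie in `B ∩ C = 1`.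
By (H1), `B ∩ C(B ∩ K) = 1`, since it lies in `L(G)` and is virtually abelian; hence whatever
normalizes `B` and centralizes `B ∩ K` centralizes `B`.
-/

open Subgroup
open scoped commutatorElement

section Conjugation

lemma mem_conjBy {B : Subgroup G} {g x : G} : x ∈ conjBy B g ↔ g * x * g⁻¹ ∈ B := by
  rw [conjBy, mem_map_equiv]
  simp

lemma conjBy_eq_self_iff {B : Subgroup G} {g : G} :
    conjBy B g = B ↔ g ∈ normalizer (B : Set G) := by
  rw [← inv_mem_iff, mem_normalizer_iff_map_conj_eq]
  rfl

lemma conjBy_mono {A B : Subgroup G} (h : A ≤ B) (g : G) : conjBy A g ≤ conjBy B g :=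
  map_mono h

lemma conjBy_inf (A B : Subgroup G) (g : G) : conjBy (A ⊓ B) g = conjBy A g ⊓ conjBy B g :=
  map_inf_eq _ _ _ (MulAut.conj g⁻¹).injective

lemma conjBy_of_normal (K : Subgroup G) [K.Normal] (g : G) : conjBy K g = K :=
  conjBy_eq_self_iff.mpr (le_normalizer_of_normal (mem_top g))

lemma conjBy_centralizer (B : Subgroup G) (g : G) :
    conjBy (centralizer (B : Set G)) g = centralizer (conjBy B g : Set G) := by
  ext x
  simp only [mem_conjBy, mem_centralizer_iff, SetLike.mem_coe]
  constructor
  · intro h b hb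
    simpa [mul_assoc] using congrArg (g⁻¹ * · * g) (h _ hb)
  · intro h b hb
    have hb' : g * (g⁻¹ * b * g) * g⁻¹ ∈ B := by simpa [mul_assoc] using hb
    simpa [mul_assoc] using congrArg (g * · * g⁻¹) (h _ hb')

lemma conjBy_normalizer (B : Subgroup G) (g : G) :
    conjBy (normalizer (B : Set G)) g = normalizer (conjBy B g : Set G) :=
  map_equiv_normalizer_eq B _

lemma index_conjBy (B : Subgroup G) (g : G) : (conjBy B g).index = B.index :=
  index_map_of_bijective (MulAut.conj g⁻¹).bijective B

end Conjugation

lemma normalizer_le_normalizer_centralizer (H : Subgroup G) :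
    normalizer (H : Set G) ≤ normalizer (centralizer (H : Set G) : Set G) := fun g hg =>
  conjBy_eq_self_iff.mp (by rw [conjBy_centralizer, conjBy_eq_self_iff.mpr hg])

lemma normalizer_le_normalizer_inf_of_normal (B K : Subgroup G) [K.Normal] :
    normalizer (B : Set G) ≤ normalizer ((B ⊓ K : Subgroup G) : Set G) :=
  (le_inf le_rfl le_normalizer_of_normal).trans inf_normalizer_le_normalizer_inf

lemma commutatorElement_mem_left {B : Subgroup G} {x y : G} (hx : x ∈ B)
    (hy : y ∈ normalizer (B : Set G)) : ⁅x, y⁆ ∈ B := by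
  rw [commutatorElement_def, mul_assoc x, mul_assoc x]
  exact mul_mem hx (by simpa [mul_assoc] using (mem_normalizer_iff.mp hy x⁻¹).mp (inv_mem hx))

lemma commutatorElement_mem_right {C : Subgroup G} {x y : G} (hx : x ∈ normalizer (C : Set G))
    (hy : y ∈ C) : ⁅x, y⁆ ∈ C := by
  rw [commutatorElement_def]
  exact mul_mem ((mem_normalizer_iff.mp hx y).mp hy) (inv_mem hy)

lemma commute_of_inf_eq_bot {B C : Subgroup G} (hBC : B ⊓ C = ⊥) {x y : G}
    (hxB : x ∈ B) (hxC : x ∈ normalizer (C : Set G))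
    (hyC : y ∈ C) (hyB : y ∈ normalizer (B : Set G)) : Commute x y := by
  rw [← commutatorElement_eq_one_iff_commute, ← mem_bot, ← hBC]
  exact ⟨commutatorElement_mem_left hxB hyB, commutatorElement_mem_right hxC hyC⟩

lemma virtSolvable_of_le_centralizer {H M : Subgroup G} (hMH : M ≤ H) (hM : M.relIndex H ≠ 0)
    (hcomm : M ≤ centralizer (M : Set G)) : VirtSolvable H :=
  ⟨M, hMH, hM, Group.isSolvable_of_comm fun a b => Subtype.ext (hcomm b.2 a a.2)⟩

lemma le_centralizer_of_centralizer_inf_eq {A B B' : Subgroup G}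
    (h : centralizer ((A ⊓ B : Subgroup G) : Set G) = centralizer (A : Set G))
    (h' : centralizer ((A ⊓ B' : Subgroup G) : Set G) = centralizer (A : Set G))
    (hBB' : B' ≤ centralizer (B : Set G)) : A ≤ centralizer (A : Set G) := by
  rw [← h']
  exact le_centralizer_iff.mp (h ▸ inf_le_right.trans (hBB'.trans (centralizer_le inf_le_right)))

namespace HypH1

theorem eq_bot_of_le_centralizer (hH1 : HypH1 G) {B : Subgroup G}
    (hB : (normalizer (B : Set G)).FiniteIndex) (hcomm : B ≤ centralizer (B : Set G)) : B = ⊥ :=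
  hH1 B hB (virtSolvable_of_le_centralizer le_rfl (by simp) hcomm)

theorem inf_centralizer_inf_eq_bot (hH1 : HypH1 G) {B : Subgroup G} (K : Subgroup G) [K.Normal]
    [K.FiniteIndex] (hB : (normalizer (B : Set G)).FiniteIndex) :
    B ⊓ centralizer ((B ⊓ K : Subgroup G) : Set G) = ⊥ := by
  set R := B ⊓ centralizer ((B ⊓ K : Subgroup G) : Set G)
  -- `R` is normalized by `N(B)`, and `K ⊓ R` is an abelian subgroup of finite index in `R`.
  have hR : normalizer (B : Set G) ≤ normalizer (R : Set G) :=
    (le_inf le_rfl ((normalizer_le_normalizer_inf_of_normal B K).trans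
      (normalizer_le_normalizer_centralizer _))).trans inf_normalizer_le_normalizer_inf
  refine hH1 R (finiteIndex_of_le hR)
    (virtSolvable_of_le_centralizer (M := K ⊓ R) inf_le_right ?_ ?_)
  · rw [inf_relIndex_right]
    exact (isFiniteRelIndex_of_finiteIndex (K := R)).relIndex_ne_zero
  · exact (inf_le_right.trans inf_le_right).trans
      (centralizer_le (le_inf (inf_le_right.trans inf_le_left) inf_le_left))

theorem mem_centralizer_of_mem_centralizer_inf (hH1 : HypH1 G) {B : Subgroup G} (K : Subgroup G)
    [K.Normal] [K.FiniteIndex] (hB : (normalizer (B : Set G)).FiniteIndex) {y : G}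
    (hyB : y ∈ normalizer (B : Set G))
    (hyK : y ∈ centralizer ((B ⊓ K : Subgroup G) : Set G)) :
    y ∈ centralizer (B : Set G) := fun x hx => by
  have hxC : x ∈ normalizer (centralizer ((B ⊓ K : Subgroup G) : Set G) : Set G) :=
    ((normalizer_le_normalizer_inf_of_normal B K).trans (normalizer_le_normalizer_centralizer _))
      (le_normalizer hx)
  have hcomm : ⁅x, y⁆ ∈ B ⊓ centralizer ((B ⊓ K : Subgroup G) : Set G) :=
    ⟨commutatorElement_mem_left hx hyB, commutatorElement_mem_right hxC hyK⟩
  rw [hH1.inf_centralizer_inf_eq_bot K hB, mem_bot, commutatorElement_eq_one_iff_commute] at hcomm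
  exact hcomm.eq

theorem inf_normalizer_le_centralizer (hH1 : HypH1 G) {B C : Subgroup G} (K : Subgroup G)
    [K.Normal] [K.FiniteIndex] (hB : (normalizer (B : Set G)).FiniteIndex)
    (hKC : K ≤ normalizer (C : Set G)) (hBC : B ⊓ C = ⊥) :
    C ⊓ normalizer (B : Set G) ≤ centralizer (B : Set G) := fun _ ⟨hyC, hyB⟩ =>
  hH1.mem_centralizer_of_mem_centralizer_inf K hB hyB fun _ ⟨hzB, hzK⟩ =>
    (commute_of_inf_eq_bot hBC hzB (hKC hzK) hyC hyB).eq

theorem le_centralizer_conjBy_of_inf_eq_bot (hH1 : HypH1 G) {B : Subgroup G}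
    (hB : IsBasal B) {g : G} (hg : conjBy B g ⊓ B = ⊥) :
    conjBy B g ≤ centralizer (B : Set G) := by
  obtain ⟨hBfin, hBconj⟩ := hB
  set K := (normalizer (B : Set G)).normalCore
  have hKB : K ≤ normalizer (B : Set G) := normalCore_le _
  have hKC : K ≤ normalizer (conjBy B g : Set G) := by
    rw [← conjBy_normalizer, ← conjBy_of_normal K g]
    exact conjBy_mono hKB g
  have hCfin : (normalizer (conjBy B g : Set G)).FiniteIndex := by
    rw [← conjBy_normalizer, finiteIndex_iff, index_conjBy]
    exact hBfin.index_ne_zero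
  intro y hy
  rcases hBconj y with hyB | hyB
  · exact hH1.inf_normalizer_le_centralizer K hBfin hKC (inf_comm B _ ▸ hg)
      ⟨hy, conjBy_eq_self_iff.mp hyB⟩
  · -- `B ⊓ K` centralizes `y ∈ conjBy B g`, so it lies in `conjBy B y ⊓ B = ⊥`; then `B` is finite.
    have hBK : B ⊓ K = ⊥ := eq_bot_iff.mpr fun z ⟨hzB, hzK⟩ => by
      have hzy : y * z = z * y :=
        hH1.inf_normalizer_le_centralizer K hCfin hKB hg ⟨hzB, hKC hzK⟩ y hy
      rw [← hyB]
      exact ⟨mem_conjBy.mpr (by rwa [hzy, mul_inv_cancel_right]), hzB⟩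
    have hBbot : B = ⊥ := eq_bot_iff.mpr fun x hx =>
      hH1.inf_centralizer_inf_eq_bot K hBfin ▸ ⟨hx, by simp [hBK, mem_centralizer_iff]⟩
    rw [hBbot]
    simp [mem_centralizer_iff]

end HypH1

theorem statement10_general (hH1 : HypH1 G) (B₁ B₂ : Subgroup G)
    (h₁ : IsBasal B₁) (h₂ : IsBasal B₂) (hn₁ : B₁ ≠ ⊥)
    (hle : Subgroup.centralizer ((B₁ ⊓ B₂ : Subgroup G) : Set G) =
      Subgroup.centralizer (B₁ : Set G)) :
    Subgroup.normalizer (B₁ : Set G) ≤ Subgroup.normalizer (B₂ : Set G) := by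
  intro g hg
  rcases h₂.2 g with hfix | hdisj
  · exact conjBy_eq_self_iff.mp hfix
  · have hcomm : conjBy B₂ g ≤ centralizer (B₂ : Set G) :=
      hH1.le_centralizer_conjBy_of_inf_eq_bot h₂ hdisj
    have hle' : centralizer ((B₁ ⊓ conjBy B₂ g : Subgroup G) : Set G) =
        centralizer (B₁ : Set G) := by
      simpa only [conjBy_centralizer, conjBy_inf, conjBy_eq_self_iff.mpr hg] using
        congrArg (conjBy · g) hle
    exact absurd (hH1.eq_bot_of_le_centralizer h₁.1
      (le_centralizer_of_centralizer_inf_eq hle hle' hcomm)) hn₁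

theorem statement10 (hH1 : HypH1 G) (B₁ B₂ : Subgroup G)
    (h₁ : IsBasal B₁) (h₂ : IsBasal B₂) (hn₁ : B₁ ≠ ⊥) (hn₂ : B₂ ≠ ⊥)
    (hle : Subgroup.centralizer ((B₁ ⊓ B₂ : Subgroup G) : Set G) =
      Subgroup.centralizer (B₁ : Set G)) :
    Subgroup.normalizer (B₁ : Set G) ≤ Subgroup.normalizer (B₂ : Set G) :=
  statement10_general hH1 B₁ B₂ h₁ h₂ hn₁ hle
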